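/- arXiv:2205.08078 — 3 statements merged into one kernel-verified Lean document; each statement's English description precedes it below -/
import Mathlib

section
/- For each m, let p_MM(m) be the infimum over W_{1j} ∈ ℝ^{s×s} and W_{2j} ∈ ℝ^{d×c} (j = 1,…,m) of Σ_{i=1}^n L(Σ_{j=1}^m (W_{1j} X_i) W_{2j}, Y_i) + (β/2) Σ_{j=1}^m (‖W_{1j}‖_F² + ‖W_{2j}‖_F²). Then there exists m* ≤ min{s², dc} such that for every m ≥ m*, p_MM(m) equals the infimum over Z ∈ ℝ^{s²×dc} of Σ_{i=1}^n L(Σ_{t=1}^s Σ_{k=1}^d X_i[t,k] · Z^{(t,k)}, Y_i) + β‖Z‖_*. -/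
open Matrix Pointwise Kronecker

noncomputable section

/-- Frobenius norm of a real matrix. -/
def frobNorm {m n : Type*} [Fintype m] [Fintype n] (A : Matrix m n ℝ) : ℝ :=
  Real.sqrt (∑ i, ∑ j, (A i j) ^ 2)

/-- Nuclear norm of a real matrix: the sum of its singular values, i.e. the square
roots of the eigenvalues of `Aᴴ * A`. -/
def nuclearNorm {m n : Type*} [Fintype m] [Fintype n] [DecidableEq n] (A : Matrix m n ℝ) : ℝ :=
  ∑ i, Real.sqrt ((show (Aᵀ * A).IsHermitian by
    simpa [Matrix.conjTranspose_eq_transpose_of_trivial] using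
      Matrix.isHermitian_conjTranspose_mul_self A).eigenvalues i)

/-- The constrained nuclear norm `‖Z‖_{*,K}`. -/
def cNuclearNorm {N ι κ : Type*} [Fintype N] [Fintype ι] [Fintype κ] [DecidableEq κ]
    (K : Matrix N ι ℝ) (Z : Matrix ι κ ℝ) : ℝ :=
  sInf {t : ℝ | 0 ≤ t ∧ Z ∈ t • convexHull ℝ
    {M : Matrix ι κ ℝ | ∃ u v, M = Matrix.vecMulVec u v ∧ (∀ r, 0 ≤ (K *ᵥ u) r) ∧
      nuclearNorm M ≤ 1}}

/-- The 0-1 diagonal matrix `diag(1{A u ≥ 0})`. -/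
def gateArr {N q : Type*} [Fintype q] [DecidableEq N] (A : Matrix N q ℝ) (u : q → ℝ) :
    Matrix N N ℝ :=
  Matrix.diagonal fun r => if 0 ≤ (A *ᵥ u) r then (1 : ℝ) else 0

/-- The set of hyperplane arrangements of a matrix `A`. -/
def arrSet {N q : Type*} [Fintype q] [DecidableEq N] (A : Matrix N q ℝ) :
    Set (Matrix N N ℝ) :=
  Set.range (gateArr A)

/-- Entrywise ReLU of a matrix. -/
def reluM {m n : Type*} (A : Matrix m n ℝ) : Matrix m n ℝ :=
  Matrix.of fun i j => max (A i j) 0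

/-- Entrywise ReLU of a vector. -/
def reluV {m : Type*} (v : m → ℝ) : m → ℝ := fun i => max (v i) 0

/-- `circ(X)`: horizontal concatenation of all circulant row-shifts of `X`. -/
def circM {s p : ℕ} (X : Matrix (Fin s) (Fin p) ℝ) : Matrix (Fin s) (Fin s × Fin p) ℝ :=
  Matrix.of fun i q => X (i + q.1) q.2

/-!
With `xⱼ = vec W₁ⱼ` and `yⱼ = vec W₂ⱼᵀ`, the matrix `Z = ∑ⱼ xⱼ yⱼᵀ` has block combination
`∑ₜₖ Xᵢ[t,k] Z^{(t,k)} = ∑ⱼ W₁ⱼ Xᵢ W₂ⱼ`, and the weight penalty is `(β/2) ∑ⱼ (‖xⱼ‖² + ‖yⱼ‖²)`.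
Every factorization of `Z` arises this way, so it suffices that `2‖Z‖_*` is the least cost
`∑ⱼ (‖xⱼ‖² + ‖yⱼ‖²)` of writing `Z` as a sum of `m ≥ min(s², dc)` rank-one terms. With an SVD
`Z = ∑ᵢ σᵢ uᵢ vᵢᵀ`, each `σᵢ = uᵢᵀ Z vᵢ = ∑ⱼ (uᵢ ⬝ xⱼ)(vᵢ ⬝ yⱼ)`, so `2ab ≤ a² + b²` and Bessel's
inequality bound `2‖Z‖_*` by any such cost; the balanced factors `√σᵢ uᵢ`, `√σᵢ vᵢ` attain it
with only `rank Z ≤ min(s², dc)` terms.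
-/

theorem BddBelow.range_of_forall_exists_le {α β : Sort*} {γ : Type*} [Preorder γ]
    {f : α → γ} {g : β → γ} (h : ∀ a, ∃ b, g b ≤ f a) (hg : BddBelow (Set.range g)) :
    BddBelow (Set.range f) :=
  let ⟨C, hC⟩ := hg
  ⟨C, Set.forall_mem_range.2 fun a => (h a).elim fun b hb => (hC ⟨b, rfl⟩).trans hb⟩

theorem Real.iInf_eq_iInf_of_forall_exists_le {α β : Sort*} [Nonempty α] [Nonempty β]
    {f : α → ℝ} {g : β → ℝ} (hfg : ∀ a, ∃ b, g b ≤ f a) (hgf : ∀ b, ∃ a, f a ≤ g b) :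
    ⨅ a, f a = ⨅ b, g b := by
  by_cases hg : BddBelow (Set.range g)
  · exact le_antisymm (ciInf_mono_of_forall_exists (hg.range_of_forall_exists_le hfg) hgf)
      (ciInf_mono_of_forall_exists hg hfg)
  · rw [Real.iInf_of_not_bddBelow hg,
      Real.iInf_of_not_bddBelow (mt (BddBelow.range_of_forall_exists_le hgf) hg)]

theorem Fintype.sum_comp_extend_by_zero {α β M M' N : Type*} [Fintype α] [Fintype β] [Zero M]
    [Zero M'] [AddCommMonoid N] (e : α ↪ β) (g : α → M) (h : α → M') (F : M → M' → N)
    (hF : F 0 0 = 0) :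
    ∑ b, F (Function.extend e g 0 b) (Function.extend e h 0 b) = ∑ a, F (g a) (h a) := by
  classical
  rw [← Finset.sum_subset (Finset.subset_univ (Finset.univ.map e)), Finset.sum_map]
  · simp [e.injective.extend_apply]
  · intro b _ hb
    have hb : ¬∃ a, e a = b := by simpa using hb
    rw [Function.extend_apply' _ _ _ hb, Function.extend_apply' _ _ _ hb]
    exact hF

theorem Fintype.sum_subtype_of_eq_zero {κ M : Type*} [Fintype κ] [AddCommMonoid M]
    {p : κ → Prop} [DecidablePred p] (f : κ → M) (hf : ∀ i, ¬p i → f i = 0) :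
    ∑ i : {i // p i}, f i = ∑ i, f i := by
  rw [← Finset.sum_subtype (Finset.univ.filter p) (by simp) f]
  exact Finset.sum_filter_of_ne fun i _ hi => by_contra fun hp => hi (hf i hp)

namespace Matrix

theorem isHermitian_transpose_mul_self {ι κ : Type*} [Fintype ι] (A : Matrix ι κ ℝ) :
    (Aᵀ * A).IsHermitian := by
  simpa [conjTranspose_eq_transpose_of_trivial] using isHermitian_conjTranspose_mul_self A

variable {ι κ α η : Type*} [Fintype ι] [Fintype κ] [Fintype α] [Fintype η]

theorem sum_dotProduct_sq_le [DecidableEq α] {u : α → ι → ℝ}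
    (hu : ∀ a b, u a ⬝ᵥ u b = if a = b then 1 else 0) (x : ι → ℝ) :
    ∑ a, (u a ⬝ᵥ x) ^ 2 ≤ x ⬝ᵥ x := by
  have hon : Orthonormal ℝ fun a => (WithLp.toLp 2 (u a) : EuclideanSpace ℝ ι) :=
    orthonormal_iff_ite.2 fun a b => by
      rw [EuclideanSpace.inner_toLp_toLp, star_trivial, dotProduct_comm, hu]
  have := hon.sum_inner_products_le (s := Finset.univ) (WithLp.toLp 2 x)
  simp only [← real_inner_self_eq_norm_sq, EuclideanSpace.inner_toLp_toLp, star_trivial,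
    Real.norm_eq_abs, sq_abs] at this
  simpa only [dotProduct_comm x] using this

theorem two_mul_sum_le_of_sum_smul_vecMulVec_eq [DecidableEq α] {σ : α → ℝ} {u : α → ι → ℝ}
    {v : α → κ → ℝ}
    (hu : ∀ a b, u a ⬝ᵥ u b = if a = b then 1 else 0)
    (hv : ∀ a b, v a ⬝ᵥ v b = if a = b then 1 else 0) {x : η → ι → ℝ} {y : η → κ → ℝ}
    (h : ∑ a, σ a • vecMulVec (u a) (v a) = ∑ b, vecMulVec (x b) (y b)) :
    2 * ∑ a, σ a ≤ ∑ b, (x b ⬝ᵥ x b + y b ⬝ᵥ y b) := by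
  -- apply `M ↦ uₐᵀ M vₐ` to both sides of `h`
  have hσ (a : α) : σ a = ∑ b, (u a ⬝ᵥ x b) * (v a ⬝ᵥ y b) := by
    have := congrArg (fun M => u a ⬝ᵥ (M *ᵥ v a)) h
    simpa [sum_mulVec, smul_mulVec, vecMulVec_mulVec, dotProduct_sum, hu, hv,
      dotProduct_comm (y _), mul_comm] using this
  calc 2 * ∑ a, σ a = ∑ b, ∑ a, 2 * (u a ⬝ᵥ x b) * (v a ⬝ᵥ y b) := by
        simp_rw [hσ, Finset.mul_sum, mul_assoc]
        exact Finset.sum_comm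
    _ ≤ ∑ b, ∑ a, ((u a ⬝ᵥ x b) ^ 2 + (v a ⬝ᵥ y b) ^ 2) := by
        gcongr
        exact two_mul_le_add_sq _ _
    _ ≤ ∑ b, (x b ⬝ᵥ x b + y b ⬝ᵥ y b) := by
        gcongr with b
        rw [Finset.sum_add_distrib]
        exact add_le_add (sum_dotProduct_sq_le hu _) (sum_dotProduct_sq_le hv _)

theorem exists_sum_vecMulVec_eq_of_embedding (e : α ↪ η) {σ : α → ℝ} (hσ : ∀ a, 0 ≤ σ a)
    {u : α → ι → ℝ} {v : α → κ → ℝ} (hu : ∀ a, u a ⬝ᵥ u a = 1) (hv : ∀ a, v a ⬝ᵥ v a = 1) :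
    ∃ (x : η → ι → ℝ) (y : η → κ → ℝ),
      ∑ b, vecMulVec (x b) (y b) = ∑ a, σ a • vecMulVec (u a) (v a) ∧
      ∑ b, (x b ⬝ᵥ x b + y b ⬝ᵥ y b) = 2 * ∑ a, σ a := by
  refine ⟨Function.extend e (fun a => √(σ a) • u a) 0,
    Function.extend e (fun a => √(σ a) • v a) 0, ?_, ?_⟩
  · rw [Fintype.sum_comp_extend_by_zero e _ _ vecMulVec (by simp)]
    simp only [smul_vecMulVec, vecMulVec_smul, smul_smul, Real.mul_self_sqrt (hσ _)]
  · rw [Fintype.sum_comp_extend_by_zero e _ _ (fun x y => x ⬝ᵥ x + y ⬝ᵥ y) (by simp),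
      Finset.mul_sum]
    simp only [smul_dotProduct, dotProduct_smul, hu, hv, smul_eq_mul, mul_one,
      Real.mul_self_sqrt (hσ _)]
    exact Finset.sum_congr rfl fun a _ => (two_mul _).symm

variable [DecidableEq κ]

section SingularValueDecomposition

variable (A : Matrix ι κ ℝ)

-- Not sorted: indexed by the columns of `A`, like the eigenvalues of `Aᵀ * A`.
def singularValue (i : κ) : ℝ :=
  √((isHermitian_transpose_mul_self A).eigenvalues i)

def rightSingularVector (i : κ) : κ → ℝ :=
  ⇑((isHermitian_transpose_mul_self A).eigenvectorBasis i)

-- Since `0⁻¹ = 0`, this is `0` whenever `singularValue A i = 0`.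
def leftSingularVector (i : κ) : ι → ℝ :=
  (singularValue A i)⁻¹ • A *ᵥ rightSingularVector A i

theorem nuclearNorm_eq_sum_singularValue : nuclearNorm A = ∑ i, singularValue A i := rfl

theorem singularValue_nonneg (i : κ) : 0 ≤ singularValue A i := Real.sqrt_nonneg _

theorem rightSingularVector_dotProduct (i j : κ) :
    rightSingularVector A i ⬝ᵥ rightSingularVector A j = if i = j then 1 else 0 := by
  simpa [rightSingularVector, EuclideanSpace.inner_eq_star_dotProduct, dotProduct_comm] using
    orthonormal_iff_ite.1 (isHermitian_transpose_mul_self A).eigenvectorBasis.orthonormal i j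

theorem transpose_mul_self_mulVec_rightSingularVector (i : κ) :
    (Aᵀ * A) *ᵥ rightSingularVector A i = singularValue A i ^ 2 • rightSingularVector A i := by
  have hnonneg : 0 ≤ (isHermitian_transpose_mul_self A).eigenvalues i :=
    eigenvalues_conjTranspose_mul_self_nonneg A i
  rw [singularValue, Real.sq_sqrt hnonneg]
  exact (isHermitian_transpose_mul_self A).mulVec_eigenvectorBasis i

theorem mulVec_rightSingularVector_dotProduct (i j : κ) :
    (A *ᵥ rightSingularVector A i) ⬝ᵥ (A *ᵥ rightSingularVector A j) =
      if i = j then singularValue A i ^ 2 else 0 := by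
  rw [dotProduct_mulVec, ← mulVec_transpose, dotProduct_comm, mulVec_mulVec,
    transpose_mul_self_mulVec_rightSingularVector, dotProduct_smul,
    rightSingularVector_dotProduct]
  by_cases h : i = j
  · simp [h]
  · simp [h, Ne.symm h]

theorem mulVec_rightSingularVector (i : κ) :
    A *ᵥ rightSingularVector A i = singularValue A i • leftSingularVector A i := by
  by_cases h : singularValue A i = 0
  · rw [h, zero_smul, ← dotProduct_self_eq_zero, mulVec_rightSingularVector_dotProduct,
      if_pos rfl, h, sq, mul_zero]
  · rw [leftSingularVector, smul_smul, mul_inv_cancel₀ h, one_smul]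

theorem leftSingularVector_dotProduct {i : κ} (hi : singularValue A i ≠ 0) (j : κ) :
    leftSingularVector A i ⬝ᵥ leftSingularVector A j = if i = j then 1 else 0 := by
  simp only [leftSingularVector, smul_dotProduct, dotProduct_smul,
    mulVec_rightSingularVector_dotProduct, smul_eq_mul]
  split_ifs with h
  · subst h; field_simp
  · simp

theorem sum_vecMulVec_rightSingularVector :
    ∑ i, vecMulVec (rightSingularVector A i) (rightSingularVector A i) = 1 := by
  have hU := mem_unitaryGroup_iff.1 (isHermitian_transpose_mul_self A).eigenvectorUnitary.2
  ext a b
  simpa [mul_apply, Matrix.sum_apply, vecMulVec_apply, rightSingularVector] using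
    congrFun (congrFun hU a) b

theorem sum_singularValue_smul_vecMulVec :
    ∑ i, singularValue A i • vecMulVec (leftSingularVector A i) (rightSingularVector A i) =
      A := by
  calc _ = ∑ i, A * vecMulVec (rightSingularVector A i) (rightSingularVector A i) := by
        simp only [mul_vecMulVec, mulVec_rightSingularVector, smul_vecMulVec]
    _ = A := by rw [← Matrix.mul_sum, sum_vecMulVec_rightSingularVector, Matrix.mul_one]

theorem nuclearNorm_eq_sum_subtype :
    nuclearNorm A = ∑ i : {i // singularValue A i ≠ 0}, singularValue A i := by
  rw [nuclearNorm_eq_sum_singularValue, Fintype.sum_subtype_of_eq_zero _ fun _ hi => not_not.1 hi]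

theorem sum_subtype_singularValue_smul_vecMulVec :
    ∑ i : {i // singularValue A i ≠ 0},
      singularValue A i • vecMulVec (leftSingularVector A i) (rightSingularVector A i) = A := by
  refine (Fintype.sum_subtype_of_eq_zero
    (fun i => singularValue A i • vecMulVec (leftSingularVector A i) (rightSingularVector A i))
    fun i hi => ?_).trans (sum_singularValue_smul_vecMulVec A)
  rw [not_not.1 hi, zero_smul]

theorem card_singularValue_ne_zero_le :
    Fintype.card {i // singularValue A i ≠ 0} ≤ min (Fintype.card ι) (Fintype.card κ) := by
  have hA := isHermitian_transpose_mul_self A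
  have hrank : A.rank = Fintype.card {i // hA.eigenvalues i ≠ 0} := by
    rw [← hA.rank_eq_card_non_zero_eigs, rank_transpose_mul_self]
  have hne (i : κ) : singularValue A i ≠ 0 ↔ hA.eigenvalues i ≠ 0 := by
    have hnonneg : 0 ≤ hA.eigenvalues i := eigenvalues_conjTranspose_mul_self_nonneg A i
    rw [singularValue, Real.sqrt_ne_zero', hnonneg.lt_iff_ne']
  rw [Fintype.card_congr (Equiv.subtypeEquivRight hne), ← hrank]
  exact le_min (rank_le_card_height A) (rank_le_card_width A)

end SingularValueDecomposition

theorem two_mul_nuclearNorm_sum_vecMulVec_le (x : η → ι → ℝ) (y : η → κ → ℝ) :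
    2 * nuclearNorm (∑ b, vecMulVec (x b) (y b)) ≤ ∑ b, (x b ⬝ᵥ x b + y b ⬝ᵥ y b) := by
  set A := ∑ b, vecMulVec (x b) (y b)
  rw [nuclearNorm_eq_sum_subtype]
  refine two_mul_sum_le_of_sum_smul_vecMulVec_eq (fun a b => ?_) (fun a b => ?_)
    (sum_subtype_singularValue_smul_vecMulVec A)
  · simp [leftSingularVector_dotProduct A a.2, Subtype.ext_iff]
  · simp [rightSingularVector_dotProduct, Subtype.ext_iff]

theorem exists_sum_vecMulVec_eq_and_two_mul_nuclearNorm_eq (A : Matrix ι κ ℝ)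
    (hη : min (Fintype.card ι) (Fintype.card κ) ≤ Fintype.card η) :
    ∃ (x : η → ι → ℝ) (y : η → κ → ℝ), ∑ b, vecMulVec (x b) (y b) = A ∧
      ∑ b, (x b ⬝ᵥ x b + y b ⬝ᵥ y b) = 2 * nuclearNorm A := by
  obtain ⟨e⟩ : Nonempty ({i // singularValue A i ≠ 0} ↪ η) :=
    Function.Embedding.nonempty_of_card_le ((card_singularValue_ne_zero_le A).trans hη)
  obtain ⟨x, y, hxy, hcost⟩ := exists_sum_vecMulVec_eq_of_embedding e
    (σ := fun i => singularValue A i) (u := fun i => leftSingularVector A i)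
    (v := fun i => rightSingularVector A i) (fun i => singularValue_nonneg A i)
    (fun i => by rw [leftSingularVector_dotProduct A i.2, if_pos rfl])
    (fun i => by rw [rightSingularVector_dotProduct, if_pos rfl])
  exact ⟨x, y, hxy.trans (sum_subtype_singularValue_smul_vecMulVec A),
    hcost.trans (by rw [nuclearNorm_eq_sum_subtype])⟩

end Matrix

theorem frobNorm_sq_eq_vec_dotProduct_vec {m n : Type*} [Fintype m] [Fintype n]
    (A : Matrix m n ℝ) : frobNorm A ^ 2 = vec A ⬝ᵥ vec A := by
  rw [frobNorm, Real.sq_sqrt (by positivity), dotProduct, Fintype.sum_prod_type,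
    Finset.sum_comm]
  simp only [vec, sq]

theorem frobNorm_transpose {m n : Type*} [Fintype m] [Fintype n] (A : Matrix m n ℝ) :
    frobNorm Aᵀ = frobNorm A := by
  rw [frobNorm, frobNorm, Finset.sum_comm]
  rfl

theorem sum_mul_mul_eq_sum_smul_blocks {σ τ δ γ α : Type*} [Fintype τ] [Fintype δ] [Fintype α]
    (X : Matrix τ δ ℝ) (W₁ : α → Matrix σ τ ℝ) (W₂ : α → Matrix δ γ ℝ) :
    ∑ j, W₁ j * X * W₂ j = ∑ t, ∑ k, X t k • Matrix.of fun a p =>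
      (∑ j, vecMulVec (vec (W₁ j)) (vec (W₂ j)ᵀ)) (t, a) (k, p) := by
  ext a p
  simp only [Matrix.sum_apply, mul_apply, Matrix.smul_apply, of_apply, vecMulVec_apply, vec,
    transpose_apply, smul_eq_mul, Finset.sum_mul, Finset.mul_sum]
  calc _ = ∑ k, ∑ t, ∑ j, W₁ j a t * X t k * W₂ j k p := by
        rw [Finset.sum_comm]
        exact Finset.sum_congr rfl fun k _ => Finset.sum_comm
    _ = _ := by
        rw [Finset.sum_comm]
        exact Finset.sum_congr rfl fun t _ => Finset.sum_congr rfl fun k _ =>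
          Finset.sum_congr rfl fun j _ => by ring

theorem linear_mlp_mixer_convex_dual_general
    (n s d c : ℕ)
    (β : ℝ) (hβ : 0 < β)
    (X : Fin n → Matrix (Fin s) (Fin d) ℝ) (Y : Fin n → Matrix (Fin s) (Fin c) ℝ)
    (L : Matrix (Fin s) (Fin c) ℝ → Matrix (Fin s) (Fin c) ℝ → ℝ) :
    ∃ mstar : ℕ, mstar ≤ min (s * s) (d * c) ∧ ∀ m : ℕ, mstar ≤ m →
      (⨅ W : (Fin m → Matrix (Fin s) (Fin s) ℝ) × (Fin m → Matrix (Fin d) (Fin c) ℝ),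
        (∑ i, L (∑ j, W.1 j * X i * W.2 j) (Y i)) +
          (β / 2) * ∑ j, (frobNorm (W.1 j) ^ 2 + frobNorm (W.2 j) ^ 2))
      =
      (⨅ Z : Matrix (Fin s × Fin s) (Fin d × Fin c) ℝ,
        (∑ i, L (∑ t : Fin s, ∑ k : Fin d,
            X i t k • (Matrix.of fun a p => Z (t, a) (k, p))) (Y i)) +
          β * nuclearNorm Z) := by
  refine ⟨min (s * s) (d * c), le_rfl, fun m hm => ?_⟩
  have hcost (W₁ : Fin m → Matrix (Fin s) (Fin s) ℝ) (W₂ : Fin m → Matrix (Fin d) (Fin c) ℝ) :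
      ∑ j, (frobNorm (W₁ j) ^ 2 + frobNorm (W₂ j) ^ 2) =
        ∑ j, (vec (W₁ j) ⬝ᵥ vec (W₁ j) + vec (W₂ j)ᵀ ⬝ᵥ vec (W₂ j)ᵀ) := by
    simp_rw [← frobNorm_transpose (W₂ _), frobNorm_sq_eq_vec_dotProduct_vec]
  apply Real.iInf_eq_iInf_of_forall_exists_le
  · rintro ⟨W₁, W₂⟩
    refine ⟨∑ j, vecMulVec (vec (W₁ j)) (vec (W₂ j)ᵀ), ?_⟩
    have hnuc := two_mul_nuclearNorm_sum_vecMulVec_le (fun j => vec (W₁ j)) fun j => vec (W₂ j)ᵀ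
    simp only [sum_mul_mul_eq_sum_smul_blocks, hcost]
    nlinarith
  · intro Z
    obtain ⟨x, y, rfl, hxy⟩ := exists_sum_vecMulVec_eq_and_two_mul_nuclearNorm_eq Z
      (η := Fin m) (by simpa using hm)
    choose W₁ hW₁ using fun j => vec_bijective.2 (x j)
    choose W₂ hW₂ using fun j => vec_bijective.2 (y j)
    refine ⟨(W₁, fun j => (W₂ j)ᵀ), le_of_eq ?_⟩
    simp only [sum_mul_mul_eq_sum_smul_blocks, hcost, transpose_transpose, hW₁, hW₂, hxy]
    ring

/-- **Theorem 3 (linear-activation MLP-Mixer).**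
For `m ≥ m*` with `m* ≤ min {s², dc}`, the non-convex linear MLP-Mixer training
problem equals a convex program whose fitting term is a data-weighted sum of the
blocks `Z^{(t,k)}` with nuclear-norm regularization. -/
theorem linear_mlp_mixer_convex_dual
    (n s d c : ℕ) (hn : 0 < n) (hs : 0 < s) (hd : 0 < d) (hc : 0 < c)
    (β : ℝ) (hβ : 0 < β)
    (X : Fin n → Matrix (Fin s) (Fin d) ℝ) (Y : Fin n → Matrix (Fin s) (Fin c) ℝ)
    (L : Matrix (Fin s) (Fin c) ℝ → Matrix (Fin s) (Fin c) ℝ → ℝ)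
    (hconv : ∀ Yi, ConvexOn ℝ Set.univ fun R => L R Yi)
    (hlsc : ∀ Yi, LowerSemicontinuous fun R => L R Yi) :
    ∃ mstar : ℕ, mstar ≤ min (s * s) (d * c) ∧ ∀ m : ℕ, mstar ≤ m →
      (⨅ W : (Fin m → Matrix (Fin s) (Fin s) ℝ) × (Fin m → Matrix (Fin d) (Fin c) ℝ),
        (∑ i, L (∑ j, W.1 j * X i * W.2 j) (Y i)) +
          (β / 2) * ∑ j, (frobNorm (W.1 j) ^ 2 + frobNorm (W.2 j) ^ 2))
      =
      (⨅ Z : Matrix (Fin s × Fin s) (Fin d × Fin c) ℝ,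
        (∑ i, L (∑ t : Fin s, ∑ k : Fin d,
            X i t k • (Matrix.of fun a p => Z (t, a) (k, p))) (Y i)) +
          β * nuclearNorm Z) :=
  linear_mlp_mixer_convex_dual_general n s d c β hβ X Y L
end
end

section
/- Let g be a map sending an input X ∈ ℝ^{s×d} and a weight matrix W ∈ ℝ^{p×q} to a matrix g(X; W) ∈ ℝ^{s×k}, and assume g is positively homogeneous in the weights: g(X; αW) = α·g(X; W) for every α > 0, X and W. Then for every m, the infimum over W_{1j} ∈ ℝ^{p×q} and W_{2j} ∈ ℝ^{k×c} (j = 1,…,m) of Σ_{i=1}^n L(Σ_{j=1}^m g(X_i; W_{1j}) W_{2j}, Y_i) + (β/2) Σ_{j=1}^m (‖W_{1j}‖_F² + ‖W_{2j}‖_F²) equals the infimum over W_{1j} with ‖W_{1j}‖_F ≤ 1 and unconstrained W_{2j} of Σ_{i=1}^n L(Σ_{j=1}^m g(X_i; W_{1j}) W_{2j}, Y_i) + β Σ_{j=1}^m ‖W_{2j}‖_F. -/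
/-!
Positive homogeneity makes the rescaling `(W₁, W₂) ↦ (α W₁, α⁻¹ W₂)`, `α > 0`, leave every neuron
`g(X; W₁) W₂` unchanged, so only the penalties have to be compared, neuron by neuron. Normalising
`‖W₁‖ = 1` turns the penalty `‖W₂‖` into `‖W₁‖ ‖W₂‖ ≤ (‖W₁‖² + ‖W₂‖²) / 2` (AM–GM); conversely,
balancing `‖W₁‖ = ‖W₂‖` achieves equality in AM–GM, and `‖W₁‖ ‖W₂‖ ≤ ‖W₂‖` when `‖W₁‖ ≤ 1`. Hence
each objective value of either problem is dominated by one of the other, so the infima agree.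
-/

open Matrix Pointwise Kronecker

noncomputable section

theorem BddBelow.range_of_forall_exists_le_s9 {ι κ : Type*} {f : ι → ℝ} {g : κ → ℝ}
    (hf : BddBelow (Set.range f)) (h : ∀ j, ∃ i, f i ≤ g j) : BddBelow (Set.range g) := by
  obtain ⟨b, hb⟩ := hf
  refine ⟨b, Set.forall_mem_range.2 fun j => ?_⟩
  obtain ⟨i, hi⟩ := h j
  exact (hb (Set.mem_range_self i)).trans hi

/-- Mutual domination forces equal infima even in the unbounded case, where both are the junk
value `0`. -/
theorem Real.iInf_eq_iInf_of_forall_exists_le_s9 {ι κ : Type*} [Nonempty ι] [Nonempty κ]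
    {f : ι → ℝ} {g : κ → ℝ} (hfg : ∀ i, ∃ j, g j ≤ f i) (hgf : ∀ j, ∃ i, f i ≤ g j) :
    ⨅ i, f i = ⨅ j, g j := by
  by_cases hf : BddBelow (Set.range f)
  · exact le_antisymm (ciInf_mono_of_forall_exists hf hgf)
      (ciInf_mono_of_forall_exists (hf.range_of_forall_exists_le_s9 hgf) hfg)
  · have hg : ¬BddBelow (Set.range g) := fun hg => hf (hg.range_of_forall_exists_le_s9 hfg)
    rw [Real.iInf_of_not_bddBelow hf, Real.iInf_of_not_bddBelow hg]

section frobNorm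

variable {m n : Type*} [Fintype m] [Fintype n]

attribute [local instance] Matrix.frobeniusNormedAddCommGroup Matrix.frobeniusNormedSpace

theorem frobNorm_eq_norm (A : Matrix m n ℝ) : frobNorm A = ‖A‖ := by
  simp [frobNorm, Matrix.frobenius_norm_def, Real.sqrt_eq_rpow]

theorem frobNorm_nonneg (A : Matrix m n ℝ) : 0 ≤ frobNorm A := Real.sqrt_nonneg _

@[simp]
theorem frobNorm_zero : frobNorm (0 : Matrix m n ℝ) = 0 := by simp [frobNorm]

theorem frobNorm_smul (α : ℝ) (A : Matrix m n ℝ) : frobNorm (α • A) = |α| * frobNorm A := by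
  simp [frobNorm_eq_norm, norm_smul]

theorem frobNorm_pos {A : Matrix m n ℝ} (hA : A ≠ 0) : 0 < frobNorm A := by
  simpa [frobNorm_eq_norm] using hA

end frobNorm

def IsPosHomogeneous {E F : Type*} [SMul ℝ E] [SMul ℝ F] (G : E → F) : Prop :=
  ∀ x (α : ℝ), 0 < α → G (α • x) = α • G x

namespace IsPosHomogeneous

theorem map_zero {E F : Type*} [Zero E] [SMulZeroClass ℝ E] [AddCommGroup F] [Module ℝ F]
    {G : E → F} (hG : IsPosHomogeneous G) : G 0 = 0 := by
  have h := hG 0 2 two_pos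
  rw [smul_zero, two_smul] at h
  simpa using h

theorem mul_smul_inv {E σ τ ρ : Type*} [SMul ℝ E] [Fintype τ]
    {G : E → Matrix σ τ ℝ} (hG : IsPosHomogeneous G) (U : E) (V : Matrix τ ρ ℝ) {α : ℝ}
    (hα : 0 < α) : G (α • U) * (α⁻¹ • V) = G U * V := by
  rw [hG U α hα, Matrix.smul_mul, Matrix.mul_smul, smul_smul, mul_inv_cancel₀ hα.ne', one_smul]

end IsPosHomogeneous

section Rescaling

variable {ι κ σ τ ρ : Type*} [Fintype ι] [Fintype κ] [Fintype τ] [Fintype ρ]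

theorem exists_rescaling_frobNorm_le_one (U : Matrix ι κ ℝ) (V : Matrix τ ρ ℝ) :
    ∃ (U' : Matrix ι κ ℝ) (V' : Matrix τ ρ ℝ),
      frobNorm U' ≤ 1 ∧ frobNorm V' ≤ (frobNorm U ^ 2 + frobNorm V ^ 2) / 2 ∧
      ∀ G : Matrix ι κ ℝ → Matrix σ τ ℝ, IsPosHomogeneous G → G U' * V' = G U * V := by
  by_cases hU : U = 0
  · refine ⟨0, 0, by simp, by simp; positivity, fun G hG => ?_⟩
    simp [hU, hG.map_zero, Matrix.mul_zero]
  have hpos := frobNorm_pos hU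
  refine ⟨(frobNorm U)⁻¹ • U, frobNorm U • V, ?_, ?_, fun G hG => ?_⟩
  · rw [frobNorm_smul, abs_of_pos (inv_pos.2 hpos), inv_mul_cancel₀ hpos.ne']
  · rw [frobNorm_smul, abs_of_pos hpos]
    linarith [two_mul_le_add_sq (frobNorm U) (frobNorm V)]
  · rw [← hG.mul_smul_inv U V (inv_pos.2 hpos), inv_inv]

theorem exists_balanced_rescaling {U : Matrix ι κ ℝ} (hU : frobNorm U ≤ 1) (V : Matrix τ ρ ℝ) :
    ∃ (U' : Matrix ι κ ℝ) (V' : Matrix τ ρ ℝ),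
      (frobNorm U' ^ 2 + frobNorm V' ^ 2) / 2 ≤ frobNorm V ∧
      ∀ G : Matrix ι κ ℝ → Matrix σ τ ℝ, IsPosHomogeneous G → G U' * V' = G U * V := by
  by_cases h : U = 0 ∨ V = 0
  · refine ⟨0, 0, by simp [frobNorm_nonneg], fun G hG => ?_⟩
    rcases h with rfl | rfl <;> simp [hG.map_zero, Matrix.mul_zero]
  obtain ⟨hU0, hV0⟩ := not_or.1 h
  have ha := frobNorm_pos hU0
  have hb := frobNorm_pos hV0
  -- scaling by `α = √(‖V‖ / ‖U‖)` makes both factors have norm `√(‖U‖ ‖V‖)`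
  set α := √(frobNorm V / frobNorm U)
  have hα : 0 < α := Real.sqrt_pos.2 (div_pos hb ha)
  have hα2 : α ^ 2 = frobNorm V / frobNorm U := Real.sq_sqrt (div_pos hb ha).le
  refine ⟨α • U, α⁻¹ • V, ?_, fun G hG => hG.mul_smul_inv U V hα⟩
  rw [frobNorm_smul, frobNorm_smul, abs_of_pos hα, abs_of_pos (inv_pos.2 hα), mul_pow, mul_pow,
    inv_pow, hα2]
  calc _ = frobNorm U * frobNorm V := by field_simp; ring
    _ ≤ 1 * frobNorm V := by gcongr
    _ = frobNorm V := one_mul _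

end Rescaling

theorem rescaling_lemma_general
    (n s d c k p q m : ℕ)
    (β : ℝ) (hβ : 0 < β)
    (X : Fin n → Matrix (Fin s) (Fin d) ℝ) (Y : Fin n → Matrix (Fin s) (Fin c) ℝ)
    (L : Matrix (Fin s) (Fin c) ℝ → Matrix (Fin s) (Fin c) ℝ → ℝ)
    (g : Matrix (Fin s) (Fin d) ℝ → Matrix (Fin p) (Fin q) ℝ → Matrix (Fin s) (Fin k) ℝ)
    (hg : ∀ (Xi : Matrix (Fin s) (Fin d) ℝ) (W : Matrix (Fin p) (Fin q) ℝ) (α : ℝ),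
      0 < α → g Xi (α • W) = α • g Xi W) :
    (⨅ W : (Fin m → Matrix (Fin p) (Fin q) ℝ) × (Fin m → Matrix (Fin k) (Fin c) ℝ),
      (∑ i, L (∑ j, g (X i) (W.1 j) * W.2 j) (Y i)) +
        (β / 2) * ∑ j, (frobNorm (W.1 j) ^ 2 + frobNorm (W.2 j) ^ 2))
    =
    (⨅ W : {W1 : Fin m → Matrix (Fin p) (Fin q) ℝ // ∀ j, frobNorm (W1 j) ≤ 1} ×
            (Fin m → Matrix (Fin k) (Fin c) ℝ),
      (∑ i, L (∑ j, g (X i) (W.1.1 j) * W.2 j) (Y i)) +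
        β * ∑ j, frobNorm (W.2 j)) := by
  have : Nonempty {W1 : Fin m → Matrix (Fin p) (Fin q) ℝ // ∀ j, frobNorm (W1 j) ≤ 1} :=
    ⟨⟨0, fun _ => by simp⟩⟩
  apply Real.iInf_eq_iInf_of_forall_exists_le_s9
  · rintro ⟨U, V⟩
    choose U' V' hU' hV' hUV using fun j =>
      exists_rescaling_frobNorm_le_one (σ := Fin s) (U j) (V j)
    refine ⟨⟨⟨U', hU'⟩, V'⟩, ?_⟩
    simp only [hUV _ _ (hg _)]
    have hsum : ∑ j, frobNorm (V' j) ≤ (∑ j, (frobNorm (U j) ^ 2 + frobNorm (V j) ^ 2)) / 2 := by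
      rw [Finset.sum_div]
      exact Finset.sum_le_sum fun j _ => hV' j
    linarith [mul_le_mul_of_nonneg_left hsum hβ.le]
  · rintro ⟨⟨U, hU⟩, V⟩
    choose U' V' hUV' hUV using fun j =>
      exists_balanced_rescaling (σ := Fin s) (hU j) (V j)
    refine ⟨⟨U', V'⟩, ?_⟩
    simp only [hUV _ _ (hg _)]
    have hsum : (∑ j, (frobNorm (U' j) ^ 2 + frobNorm (V' j) ^ 2)) / 2 ≤ ∑ j, frobNorm (V j) := by
      rw [Finset.sum_div]
      exact Finset.sum_le_sum fun j _ => hUV' j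
    linarith [mul_le_mul_of_nonneg_left hsum hβ.le]

/-- **Lemma 3 (rescaling).**  For a generic first layer `g` that is positively
homogeneous in its weights, the weight-decay penalized training problem equals
the problem with unit-Frobenius-norm-constrained first-layer weights and a
Frobenius-norm penalty on the second layer. -/
theorem rescaling_lemma
    (n s d c k p q m : ℕ) (hn : 0 < n) (hs : 0 < s) (hd : 0 < d) (hc : 0 < c)
    (hk : 0 < k) (hp : 0 < p) (hq : 0 < q) (hm : 0 < m)
    (β : ℝ) (hβ : 0 < β)
    (X : Fin n → Matrix (Fin s) (Fin d) ℝ) (Y : Fin n → Matrix (Fin s) (Fin c) ℝ)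
    (L : Matrix (Fin s) (Fin c) ℝ → Matrix (Fin s) (Fin c) ℝ → ℝ)
    (g : Matrix (Fin s) (Fin d) ℝ → Matrix (Fin p) (Fin q) ℝ → Matrix (Fin s) (Fin k) ℝ)
    (hg : ∀ (Xi : Matrix (Fin s) (Fin d) ℝ) (W : Matrix (Fin p) (Fin q) ℝ) (α : ℝ),
      0 < α → g Xi (α • W) = α • g Xi W) :
    (⨅ W : (Fin m → Matrix (Fin p) (Fin q) ℝ) × (Fin m → Matrix (Fin k) (Fin c) ℝ),
      (∑ i, L (∑ j, g (X i) (W.1 j) * W.2 j) (Y i)) +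
        (β / 2) * ∑ j, (frobNorm (W.1 j) ^ 2 + frobNorm (W.2 j) ^ 2))
    =
    (⨅ W : {W1 : Fin m → Matrix (Fin p) (Fin q) ℝ // ∀ j, frobNorm (W1 j) ≤ 1} ×
            (Fin m → Matrix (Fin k) (Fin c) ℝ),
      (∑ i, L (∑ j, g (X i) (W.1.1 j) * W.2 j) (Y i)) +
        β * ∑ j, frobNorm (W.2 j)) :=
  rescaling_lemma_general n s d c k p q m β hβ X Y L g hg
end
end

section
/- Let Z ∈ ℝ^{d²×dc} have singular value decomposition Z = Σ_{j=1}^r σ_j u_j v_jᵀ, where σ_j > 0, the u_j ∈ ℝ^{d²} are orthonormal and the v_j ∈ ℝ^{dc} are orthonormal. Define W_{1j} ∈ ℝ^{d×d} by W_{1j}[a,k] := √σ_j · u_j[(k−1)d + a] and W_{2j} ∈ ℝ^{d×c} by W_{2j}[ℓ,p] := √σ_j · v_j[(ℓ−1)c + p]. Then Σ_{i=1}^n L(Σ_{j=1}^r (X_i W_{1j} X_iᵀ) X_i W_{2j}, Y_i) + (β/2) Σ_{j=1}^r (‖W_{1j}‖_F² + ‖W_{2j}‖_F²) = Σ_{i=1}^n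 L(Σ_{k=1}^d Σ_{ℓ=1}^d G_i[k,ℓ] · X_i Z^{(k,ℓ)}, Y_i) + β‖Z‖_*, where G_i := X_iᵀ X_i; in particular, every solution of the convex linear self-attention program yields weights of the non-convex linear self-attention problem achieving the same objective value. -/
open Matrix Pointwise Kronecker

noncomputable section

/-!
The convex model's prediction `∑ₖ ∑ₗ G[k,ℓ] X Z^{(k,ℓ)}` is linear in `Z`, and on a rank-one
matrix `u vᵀ` it equals `X W₁ G W₂` with `W₁`, `W₂` the reshapings of `u`, `v`; so the heads built
from the terms `σⱼ uⱼ vⱼᵀ` of the SVD reproduce the prediction of `Z`. By orthonormality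
`‖W₁ⱼ‖_F² = ‖W₂ⱼ‖_F² = σⱼ`, while `‖Z‖_* = ∑ σⱼ` because `√(ZᵀZ) = ∑ σⱼ vⱼ vⱼᵀ`.
-/

open scoped MatrixOrder

section Frobenius

variable {m n : Type*} [Fintype m] [Fintype n]

lemma frobNorm_sq (A : Matrix m n ℝ) : frobNorm A ^ 2 = ∑ i, ∑ j, A i j ^ 2 :=
  Real.sq_sqrt <| Finset.sum_nonneg fun _ _ => Finset.sum_nonneg fun _ _ => sq_nonneg _

lemma frobNorm_of_mul_curry_sq (a : ℝ) (w : m × n → ℝ) :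
    frobNorm (of fun i j => a * w (i, j)) ^ 2 = a ^ 2 * (w ⬝ᵥ w) := by
  simp only [frobNorm_sq, of_apply, mul_pow, ← Finset.mul_sum, dotProduct,
    Fintype.sum_prod_type, ← sq]

lemma frobNorm_of_mul_curry_swap_sq (a : ℝ) (w : m × n → ℝ) :
    frobNorm (of fun j i => a * w (i, j)) ^ 2 = a ^ 2 * (w ⬝ᵥ w) := by
  rw [frobNorm_sq, Finset.sum_comm]
  exact frobNorm_sq (of fun i j => a * w (i, j)) ▸ frobNorm_of_mul_curry_sq a w

end Frobenius

section RankOne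

variable {R ι l m n : Type*} [CommRing R] [Fintype ι] [DecidableEq ι] [Fintype m]

lemma sum_smul_vecMulVec_mul_sum_smul_vecMulVec (a b : ι → R) (x : ι → l → R)
    (w : ι → m → R) (y : ι → n → R) (hw : ∀ j j', w j ⬝ᵥ w j' = if j = j' then 1 else 0) :
    (∑ j, a j • vecMulVec (x j) (w j)) * (∑ j, b j • vecMulVec (w j) (y j)) =
      ∑ j, (a j * b j) • vecMulVec (x j) (y j) := by
  have hterm : ∀ j j', a j • vecMulVec (x j) (w j) * b j' • vecMulVec (w j') (y j') =
      if j = j' then (a j * b j) • vecMulVec (x j) (y j) else 0 := by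
    intro j j'
    rw [Matrix.smul_mul, Matrix.mul_smul, vecMulVec_mul_vecMulVec, hw]
    split_ifs with h
    · rw [h, one_smul, smul_smul, mul_comm]
    · ext; simp [vecMulVec_apply]
  simp only [Matrix.sum_mul, Matrix.mul_sum, hterm, Finset.sum_ite_eq', Finset.mem_univ, if_true]

end RankOne

section NuclearNorm

variable {ι m n : Type*} [Fintype ι] [Fintype m] [Fintype n] [DecidableEq n]

lemma nuclearNorm_eq_trace_sqrt (A : Matrix m n ℝ) :
    nuclearNorm A = (CFC.sqrt (Aᵀ * A)).trace := by
  have hA : (Aᵀ * A).PosSemidef := by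
    simpa using Matrix.posSemidef_conjTranspose_mul_self A
  rw [CFC.sqrt_eq_cfc, cfc_nnreal_eq_real _ (Aᵀ * A), hA.1.cfc_eq, Matrix.IsHermitian.cfc,
    Unitary.conjStarAlgAut_apply, Matrix.trace_mul_comm, ← Matrix.mul_assoc,
    Unitary.coe_star_mul_self]
  simp [nuclearNorm, Matrix.trace_diagonal, max_eq_left (hA.eigenvalues_nonneg _)]

omit [DecidableEq n] in
lemma posSemidef_sum_smul_vecMulVec_self {σ : ι → ℝ} (hσ : ∀ j, 0 ≤ σ j) (v : ι → n → ℝ) :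
    (∑ j, σ j • vecMulVec (v j) (v j)).PosSemidef :=
  posSemidef_sum _ fun j _ => (posSemidef_vecMulVec_self_star (v j)).smul (hσ j)

theorem nuclearNorm_sum_smul_vecMulVec [DecidableEq ι] {σ : ι → ℝ} (hσ : ∀ j, 0 ≤ σ j)
    (u : ι → m → ℝ) (v : ι → n → ℝ)
    (hu : ∀ j j', u j ⬝ᵥ u j' = if j = j' then 1 else 0)
    (hv : ∀ j j', v j ⬝ᵥ v j' = if j = j' then 1 else 0) :
    nuclearNorm (∑ j, σ j • vecMulVec (u j) (v j)) = ∑ j, σ j := by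
  set C := ∑ j, σ j • vecMulVec (v j) (v j)
  have hC : C.PosSemidef := posSemidef_sum_smul_vecMulVec_self hσ v
  have hZZ : (∑ j, σ j • vecMulVec (u j) (v j))ᵀ * ∑ j, σ j • vecMulVec (u j) (v j) = C * C := by
    simp only [transpose_sum, transpose_smul, transpose_vecMulVec, C,
      sum_smul_vecMulVec_mul_sum_smul_vecMulVec _ _ _ _ _ hu,
      sum_smul_vecMulVec_mul_sum_smul_vecMulVec _ _ _ _ _ hv]
  rw [nuclearNorm_eq_trace_sqrt, hZZ, CFC.sqrt_mul_self C hC.nonneg, trace_sum]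
  simp [trace_vecMulVec, hv]

end NuclearNorm

section Attention

variable {R s a k l p : Type*} [CommRing R] [Fintype a] [Fintype k] [Fintype l]

def convexLinearAttention (X : Matrix s a R) (G : Matrix k l R) :
    Matrix (k × a) (l × p) R →ₗ[R] Matrix s p R where
  toFun Z := ∑ k, ∑ l, G k l • (X * of fun a p => Z (k, a) (l, p))
  map_add' Z₁ Z₂ := by
    simp only [← Finset.sum_add_distrib, ← smul_add, ← Matrix.mul_add]
    rfl
  map_smul' c Z := by
    simp only [RingHom.id_apply, Finset.smul_sum, ← Matrix.mul_smul, smul_comm c (G _ _)]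
    rfl

lemma convexLinearAttention_vecMulVec (X : Matrix s a R) (G : Matrix k l R)
    (U : k × a → R) (V : l × p → R) :
    convexLinearAttention X G (vecMulVec U V) =
      X * (of fun a k => U (k, a)) * G * (of fun l p => V (l, p)) := by
  ext t q
  simp only [convexLinearAttention, LinearMap.coe_mk, AddHom.coe_mk, Matrix.sum_apply,
    Matrix.smul_apply, mul_apply, of_apply, vecMulVec_apply, smul_eq_mul, Finset.mul_sum,
    Finset.sum_mul]
  rw [Finset.sum_comm]
  exact Finset.sum_congr rfl fun _ _ => Finset.sum_congr rfl fun _ _ =>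
    Finset.sum_congr rfl fun _ _ => by ring

lemma sum_mul_of_sqrt_mul_mul_of_sqrt {ι : Type*} [Fintype ι] (X : Matrix s a ℝ)
    (G : Matrix k l ℝ) {σ : ι → ℝ} (hσ : ∀ j, 0 ≤ σ j) (u : ι → k × a → ℝ)
    (v : ι → l × p → ℝ) :
    ∑ j, X * (of fun a k => √(σ j) * u j (k, a)) * G * (of fun l p => √(σ j) * v j (l, p)) =
      convexLinearAttention X G (∑ j, σ j • vecMulVec (u j) (v j)) := by
  rw [map_sum]
  refine Finset.sum_congr rfl fun j _ => ?_
  change X * (√(σ j) • of fun a k => u j (k, a)) * G * (√(σ j) • of fun l p => v j (l, p)) = _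
  rw [map_smul, convexLinearAttention_vecMulVec]
  simp only [Matrix.smul_mul, Matrix.mul_smul, smul_smul, Real.mul_self_sqrt (hσ j)]

end Attention

theorem linear_self_attention_convex_to_nonconvex_map_general
    (n s d c r : ℕ)
    (β : ℝ)
    (X : Fin n → Matrix (Fin s) (Fin d) ℝ) (Y : Fin n → Matrix (Fin s) (Fin c) ℝ)
    (L : Matrix (Fin s) (Fin c) ℝ → Matrix (Fin s) (Fin c) ℝ → ℝ)
    (Z : Matrix (Fin d × Fin d) (Fin d × Fin c) ℝ)
    (σ : Fin r → ℝ) (hσ : ∀ j, 0 < σ j)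
    (u : Fin r → (Fin d × Fin d → ℝ)) (v : Fin r → (Fin d × Fin c → ℝ))
    (hu : ∀ j j', (∑ x, u j x * u j' x) = if j = j' then 1 else 0)
    (hv : ∀ j j', (∑ x, v j x * v j' x) = if j = j' then 1 else 0)
    (hZ : Z = ∑ j, σ j • Matrix.vecMulVec (u j) (v j)) :
    (∑ i, L (∑ j : Fin r,
        X i * (Matrix.of fun a k => Real.sqrt (σ j) * u j (k, a)) * (X i)ᵀ *
          (X i) * (Matrix.of fun l p => Real.sqrt (σ j) * v j (l, p))) (Y i)) +
      (β / 2) * ∑ j : Fin r,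
        (frobNorm (Matrix.of fun a k => Real.sqrt (σ j) * u j (k, a)) ^ 2 +
         frobNorm (Matrix.of fun l p => Real.sqrt (σ j) * v j (l, p)) ^ 2)
    =
    (∑ i, L (∑ k : Fin d, ∑ l : Fin d,
        ((X i)ᵀ * X i) k l • (X i * Matrix.of fun a p => Z (k, a) (l, p))) (Y i)) +
      β * nuclearNorm Z := by
  subst hZ
  have hσ₀ : ∀ j, 0 ≤ σ j := fun j => (hσ j).le
  have hprediction : ∀ i, ∑ j : Fin r,
      X i * (of fun a k => √(σ j) * u j (k, a)) * (X i)ᵀ * X i *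
        (of fun l p => √(σ j) * v j (l, p)) =
      convexLinearAttention (X i) ((X i)ᵀ * X i) (∑ j, σ j • vecMulVec (u j) (v j)) := by
    intro i
    simp only [Matrix.mul_assoc _ (X i)ᵀ (X i)]
    exact sum_mul_of_sqrt_mul_mul_of_sqrt (X i) _ hσ₀ u v
  have hweights : ∀ j,
      frobNorm (of fun a k => √(σ j) * u j (k, a)) ^ 2 +
        frobNorm (of fun l p => √(σ j) * v j (l, p)) ^ 2 = 2 * σ j := by
    intro j
    rw [frobNorm_of_mul_curry_swap_sq, frobNorm_of_mul_curry_sq, Real.sq_sqrt (hσ₀ j),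
      dotProduct, hu, dotProduct, hv, if_pos rfl]
    ring
  rw [nuclearNorm_sum_smul_vecMulVec hσ₀ u v hu hv]
  simp only [hprediction, hweights, ← Finset.mul_sum]
  congr 1
  ring

/-- **Convex-to-non-convex mapping for linear self-attention.**
Given a singular value decomposition `Z = Σ_j σ_j u_j v_jᵀ` (with `σ_j > 0` and
orthonormal families `u_j ∈ ℝ^{d²}`, `v_j ∈ ℝ^{dc}`, rows of `Z` indexed
block-major by `Fin d × Fin d` and columns by `Fin d × Fin c`), the weights
`W₁ⱼ[a,k] = √σ_j · u_j[(k,a)]` and `W₂ⱼ[ℓ,p] = √σ_j · v_j[(ℓ,p)]` achieve the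
same objective value in the non-convex linear self-attention problem as `Z`
does in the convex program. -/
theorem linear_self_attention_convex_to_nonconvex_map
    (n s d c r : ℕ) (hn : 0 < n) (hs : 0 < s) (hd : 0 < d) (hc : 0 < c)
    (β : ℝ) (hβ : 0 < β)
    (X : Fin n → Matrix (Fin s) (Fin d) ℝ) (Y : Fin n → Matrix (Fin s) (Fin c) ℝ)
    (L : Matrix (Fin s) (Fin c) ℝ → Matrix (Fin s) (Fin c) ℝ → ℝ)
    (Z : Matrix (Fin d × Fin d) (Fin d × Fin c) ℝ)
    (σ : Fin r → ℝ) (hσ : ∀ j, 0 < σ j)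
    (u : Fin r → (Fin d × Fin d → ℝ)) (v : Fin r → (Fin d × Fin c → ℝ))
    (hu : ∀ j j', (∑ x, u j x * u j' x) = if j = j' then 1 else 0)
    (hv : ∀ j j', (∑ x, v j x * v j' x) = if j = j' then 1 else 0)
    (hZ : Z = ∑ j, σ j • Matrix.vecMulVec (u j) (v j)) :
    (∑ i, L (∑ j : Fin r,
        X i * (Matrix.of fun a k => Real.sqrt (σ j) * u j (k, a)) * (X i)ᵀ *
          (X i) * (Matrix.of fun l p => Real.sqrt (σ j) * v j (l, p))) (Y i)) +
      (β / 2) * ∑ j : Fin r,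
        (frobNorm (Matrix.of fun a k => Real.sqrt (σ j) * u j (k, a)) ^ 2 +
         frobNorm (Matrix.of fun l p => Real.sqrt (σ j) * v j (l, p)) ^ 2)
    =
    (∑ i, L (∑ k : Fin d, ∑ l : Fin d,
        ((X i)ᵀ * X i) k l • (X i * Matrix.of fun a p => Z (k, a) (l, p))) (Y i)) +
      β * nuclearNorm Z :=
  linear_self_attention_convex_to_nonconvex_map_general n s d c r β X Y L Z σ hσ u v hu hv hZ
end
end
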